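/- arXiv:2605.12492 — 6 statements merged into one kernel-verified Lean document; each statement's English description precedes it below -/
import Mathlib

section
/- Let η be a real number, and let W : ℕ → ℝ^{m×n}, S : ℕ → ℝ^{m×m}, T : ℕ → ℝ^{n×n} be sequences such that for every t, S_t and T_t are skew-symmetric and W_{t+1} = exp(−η S_t) · W_t · exp(−η T_t). Then for every t, the matrix W_tᵀ W_t has the same characteristic polynomial as W_0ᵀ W_0; in particular all iterates W_t have the same singular values as the initialization W_0. -/
open Matrix

lemma charpoly_conj_of_mul_eq_one {k : ℕ} (P Q A : Matrix (Fin k) (Fin k) ℝ)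
    (hPQ : P * Q = 1) : (P * A * Q).charpoly = A.charpoly := by
  have key : charmatrix (P * A * Q) =
      (P.map Polynomial.C) * charmatrix A * (Q.map Polynomial.C) := by
    have hPQ' : (P.map Polynomial.C) * (Q.map Polynomial.C) = 1 := by
      rw [← Matrix.map_mul, hPQ]
      simp
    unfold charmatrix
    rw [mul_sub, sub_mul]
    congr 1
    · have hc := (Matrix.scalar_commute (n := Fin k) Polynomial.X
        (fun r => Polynomial.commute_X r) (P.map Polynomial.C)).eq
      rw [← hc, mul_assoc, hPQ', mul_one]
    · simp [RingHom.mapMatrix_apply, Matrix.map_mul]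
  have hQP : Q * P = 1 := mul_eq_one_comm.mp hPQ
  have hQP' : (Q.map Polynomial.C) * (P.map Polynomial.C) = 1 := by
    rw [← Matrix.map_mul, hQP]; simp
  unfold Matrix.charpoly
  rw [key, det_mul, det_mul]
  have : (Q.map Polynomial.C).det * (P.map Polynomial.C).det = 1 := by
    rw [← det_mul, hQP', det_one]
  calc (P.map Polynomial.C).det * (charmatrix A).det * (Q.map Polynomial.C).det
      = ((Q.map Polynomial.C).det * (P.map Polynomial.C).det) * (charmatrix A).det := by ring
    _ = (charmatrix A).det := by rw [this, one_mul]

/-- Pion's exact update rule preserves the weight spectrum: if each `S t` and `T t`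
is skew-symmetric and `W (t+1) = exp (-η • S t) * W t * exp (-η • T t)`, then every
iterate `W t` has the same Gram characteristic polynomial (hence the same singular
values) as the initialization `W 0`. -/
theorem pion_update_preserves_spectrum {m n : ℕ} (η : ℝ)
    (W : ℕ → Matrix (Fin m) (Fin n) ℝ)
    (S : ℕ → Matrix (Fin m) (Fin m) ℝ)
    (T : ℕ → Matrix (Fin n) (Fin n) ℝ)
    (hS : ∀ t, (S t)ᵀ = -(S t))
    (hT : ∀ t, (T t)ᵀ = -(T t))
    (hW : ∀ t, W (t + 1) =
      NormedSpace.exp (-(η • S t)) * W t * NormedSpace.exp (-(η • T t))) :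
    ∀ t, ((W t)ᵀ * W t).charpoly = ((W 0)ᵀ * W 0).charpoly := by
  intro t
  induction t with
  | zero => rfl
  | succ t ih =>
    rw [← ih]
    have expmul : ∀ {k : ℕ} (A : Matrix (Fin k) (Fin k) ℝ),
        NormedSpace.exp A * NormedSpace.exp (-A) = 1 := by
      intro k A
      rw [← Matrix.exp_add_of_commute _ _ (Commute.refl A).neg_right, add_neg_cancel,
        NormedSpace.exp_zero]
    have hSexp : (NormedSpace.exp (-(η • S t)))ᵀ = NormedSpace.exp (η • S t) := by
      rw [← Matrix.exp_transpose]
      congr 1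
      rw [transpose_neg, transpose_smul, hS, smul_neg, neg_neg]
    have hTexp : (NormedSpace.exp (-(η • T t)))ᵀ = NormedSpace.exp (η • T t) := by
      rw [← Matrix.exp_transpose]
      congr 1
      rw [transpose_neg, transpose_smul, hT, smul_neg, neg_neg]
    have key : (W (t + 1))ᵀ * W (t + 1) =
        NormedSpace.exp (η • T t) * ((W t)ᵀ * W t) * NormedSpace.exp (-(η • T t)) := by
      rw [hW t, transpose_mul, transpose_mul, hSexp, hTexp]
      have h1 : NormedSpace.exp (η • S t) * (NormedSpace.exp (-(η • S t)) *
          (W t * NormedSpace.exp (-(η • T t)))) = W t * NormedSpace.exp (-(η • T t)) := by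
        rw [← Matrix.mul_assoc, expmul, Matrix.one_mul]
      simp only [Matrix.mul_assoc]
      rw [h1]
    rw [key]
    exact charpoly_conj_of_mul_eq_one _ _ _ (expmul _)
end

section
/- Let W and G be real m×n matrices. Then the following are equivalent: (i) trace(Gᵀ (A W + W B)) = 0 for every real skew-symmetric m×m matrix A and every real skew-symmetric n×n matrix B; (ii) G Wᵀ − W Gᵀ = 0 and Wᵀ G − Gᵀ W = 0. -/
open Matrix

lemma eq_zero_of_trace_transpose_mul_self {k : Type*} [Fintype k] [DecidableEq k]
    (M : Matrix k k ℝ) (h : Matrix.trace (Mᵀ * M) = 0) : M = 0 := by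
  have h' : ∑ j, ∑ i, M i j * M i j = 0 := by
    simpa [Matrix.trace, Matrix.diag, Matrix.mul_apply, Matrix.transpose_apply] using h
  ext i j
  have hj := (Finset.sum_eq_zero_iff_of_nonneg (fun j _ => Finset.sum_nonneg
    (fun i _ => mul_self_nonneg (M i j)))).mp h' j (Finset.mem_univ j)
  have hi := (Finset.sum_eq_zero_iff_of_nonneg (fun i _ => mul_self_nonneg (M i j))).mp hj i
    (Finset.mem_univ i)
  simpa using mul_self_eq_zero.mp hi

lemma tcyc4 {a b c d : Type*} [Fintype a] [Fintype b] [Fintype c] [Fintype d]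
    (A : Matrix a b ℝ) (B : Matrix b c ℝ) (C : Matrix c d ℝ) (D : Matrix d a ℝ) :
    Matrix.trace (A * (B * (C * D))) = Matrix.trace (D * (A * (B * C))) := by
  calc Matrix.trace (A * (B * (C * D))) = Matrix.trace ((A * B * C) * D) := by
        rw [Matrix.mul_assoc, Matrix.mul_assoc]
    _ = Matrix.trace (D * (A * B * C)) := Matrix.trace_mul_comm _ _
    _ = Matrix.trace (D * (A * (B * C))) := by rw [Matrix.mul_assoc]

lemma ttrans4 {a b c d : Type*} [Fintype a] [Fintype b] [Fintype c] [Fintype d]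
    (A : Matrix a b ℝ) (B : Matrix b c ℝ) (C : Matrix c d ℝ) (D : Matrix d a ℝ) :
    Matrix.trace (A * (B * (C * D))) = Matrix.trace (Dᵀ * (Cᵀ * (Bᵀ * Aᵀ))) := by
  rw [← Matrix.trace_transpose (A * (B * (C * D)))]
  simp [Matrix.transpose_mul, Matrix.mul_assoc]

lemma trace_skew_mul_symm {k : Type*} [Fintype k]
    (A M : Matrix k k ℝ) (hA : Aᵀ = -A) (hM : Mᵀ = M) : Matrix.trace (A * M) = 0 := by
  have key : Matrix.trace (A * M) = -Matrix.trace (A * M) := by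
    calc Matrix.trace (A * M) = Matrix.trace ((A * M)ᵀ) := (Matrix.trace_transpose _).symm
      _ = Matrix.trace (Mᵀ * Aᵀ) := by rw [Matrix.transpose_mul]
      _ = Matrix.trace (M * (-A)) := by rw [hA, hM]
      _ = -Matrix.trace (A * M) := by rw [Matrix.mul_neg, Matrix.trace_neg, Matrix.trace_mul_comm]
  linarith

/-- First-order stationarity on the isospectral manifold: `G` is Frobenius-orthogonal
to every tangent direction `A * W + W * B` (with `A`, `B` skew-symmetric) if and only if
both Lie algebra gradients vanish: `G * Wᵀ - W * Gᵀ = 0` and `Wᵀ * G - Gᵀ * W = 0`. -/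
theorem stationarity_iff_lie_gradients_vanish {m n : ℕ}
    (W G : Matrix (Fin m) (Fin n) ℝ) :
    (∀ (A : Matrix (Fin m) (Fin m) ℝ) (B : Matrix (Fin n) (Fin n) ℝ),
        Aᵀ = -A → Bᵀ = -B → Matrix.trace (Gᵀ * (A * W + W * B)) = 0) ↔
      (G * Wᵀ - W * Gᵀ = 0 ∧ Wᵀ * G - Gᵀ * W = 0) := by
  constructor
  · intro h
    constructor
    · set S : Matrix (Fin m) (Fin m) ℝ := G * Wᵀ - W * Gᵀ with hSdef
      have hSskew : Sᵀ = -S := by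
        simp [hSdef, Matrix.transpose_sub, Matrix.transpose_mul, neg_sub]
      have h0 : Matrix.trace (Gᵀ * (S * W)) = 0 := by
        simpa using h S 0 hSskew (by simp)
      have hkey : Matrix.trace (Sᵀ * S) = 2 * Matrix.trace (Gᵀ * (S * W)) := by
        have e1 : Matrix.trace (W * (Gᵀ * (G * Wᵀ))) = Matrix.trace (Gᵀ * (G * (Wᵀ * W))) :=
          (tcyc4 Gᵀ G Wᵀ W).symm
        have e2 : Matrix.trace (G * (Wᵀ * (W * Gᵀ))) = Matrix.trace (Gᵀ * (G * (Wᵀ * W))) :=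
          tcyc4 G Wᵀ W Gᵀ
        have e3 : Matrix.trace (W * (Gᵀ * (W * Gᵀ))) = Matrix.trace (Gᵀ * (W * (Gᵀ * W))) :=
          tcyc4 W Gᵀ W Gᵀ
        have e4 : Matrix.trace (G * (Wᵀ * (G * Wᵀ))) = Matrix.trace (Gᵀ * (W * (Gᵀ * W))) := by
          calc Matrix.trace (G * (Wᵀ * (G * Wᵀ)))
              = Matrix.trace (W * (Gᵀ * (W * Gᵀ))) := by
                simpa using ttrans4 G Wᵀ G Wᵀ
            _ = Matrix.trace (Gᵀ * (W * (Gᵀ * W))) := e3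
        simp only [hSdef, Matrix.transpose_sub, Matrix.transpose_mul,
          Matrix.transpose_transpose, Matrix.sub_mul, Matrix.mul_sub, Matrix.mul_assoc,
          Matrix.trace_sub]
        rw [e1, e2, e3, e4]; ring
      exact eq_zero_of_trace_transpose_mul_self S (by rw [hkey, h0]; ring)
    · set T : Matrix (Fin n) (Fin n) ℝ := Wᵀ * G - Gᵀ * W with hTdef
      have hTskew : Tᵀ = -T := by
        simp [hTdef, Matrix.transpose_sub, Matrix.transpose_mul, neg_sub]
      have h0 : Matrix.trace (Gᵀ * (W * T)) = 0 := by
        simpa using h 0 T (by simp) hTskew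
      have hkey : Matrix.trace (Tᵀ * T) = 2 * Matrix.trace (Gᵀ * (W * T)) := by
        have e1 : Matrix.trace (Wᵀ * (G * (Gᵀ * W))) = Matrix.trace (Gᵀ * (W * (Wᵀ * G))) := by
          calc Matrix.trace (Wᵀ * (G * (Gᵀ * W)))
              = Matrix.trace (W * (Wᵀ * (G * Gᵀ))) := tcyc4 Wᵀ G Gᵀ W
            _ = Matrix.trace (Gᵀ * (W * (Wᵀ * G))) := tcyc4 W Wᵀ G Gᵀ
        have e2 : Matrix.trace (Wᵀ * (G * (Wᵀ * G))) = Matrix.trace (Gᵀ * (W * (Gᵀ * W))) := by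
          simpa using ttrans4 Wᵀ G Wᵀ G
        simp only [hTdef, Matrix.transpose_sub, Matrix.transpose_mul,
          Matrix.transpose_transpose, Matrix.sub_mul, Matrix.mul_sub, Matrix.mul_assoc,
          Matrix.trace_sub]
        rw [e1, e2]; ring
      exact eq_zero_of_trace_transpose_mul_self T (by rw [hkey, h0]; ring)
  · rintro ⟨hS, hT⟩ A B hA hB
    have hSsymm : (W * Gᵀ)ᵀ = W * Gᵀ := by
      have : G * Wᵀ = W * Gᵀ := by linear_combination (norm := abel) hS
      rw [Matrix.transpose_mul, Matrix.transpose_transpose, this]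
    have hTsymm : (Gᵀ * W)ᵀ = Gᵀ * W := by
      have : Wᵀ * G = Gᵀ * W := by linear_combination (norm := abel) hT
      rw [Matrix.transpose_mul, Matrix.transpose_transpose, this]
    have h1 : Matrix.trace (Gᵀ * (A * W)) = 0 := by
      calc Matrix.trace (Gᵀ * (A * W)) = Matrix.trace ((A * W) * Gᵀ) := Matrix.trace_mul_comm _ _
        _ = Matrix.trace (A * (W * Gᵀ)) := by rw [Matrix.mul_assoc]
        _ = 0 := trace_skew_mul_symm A (W * Gᵀ) hA hSsymm
    have h2 : Matrix.trace (Gᵀ * (W * B)) = 0 := by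
      calc Matrix.trace (Gᵀ * (W * B)) = Matrix.trace ((Gᵀ * W) * B) := by rw [Matrix.mul_assoc]
        _ = Matrix.trace (B * (Gᵀ * W)) := Matrix.trace_mul_comm _ _
        _ = 0 := trace_skew_mul_symm B (Gᵀ * W) hB hTsymm
    rw [Matrix.mul_add, Matrix.trace_add, h1, h2, add_zero]
end

section
/- Let W and G be real m×n matrices and set G_in = Wᵀ G − Gᵀ W. Then trace(Gᵀ · (W · G_in)) = (1/2) · ‖G_in‖_F², where ‖·‖_F is the Frobenius norm. -/
open Matrix

/-- The Frobenius norm of a real matrix: `‖A‖_F = sqrt (trace (Aᵀ * A))`. -/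
noncomputable def frobNorm {m n : ℕ} (A : Matrix (Fin m) (Fin n) ℝ) : ℝ :=
  Real.sqrt (Matrix.trace (Aᵀ * A))

lemma trace_transpose_mul_self_nonneg {m n : ℕ} (B : Matrix (Fin m) (Fin n) ℝ) :
    0 ≤ Matrix.trace (Bᵀ * B) := by
  rw [Matrix.trace]
  apply Finset.sum_nonneg
  intro i _
  simp only [Matrix.diag_apply, Matrix.mul_apply, Matrix.transpose_apply]
  exact Finset.sum_nonneg fun j _ => mul_self_nonneg _

/-- Descent identity for the input-side Lie algebra gradient `G_in = WᵀG - GᵀW`: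
`⟨G, W * G_in⟩ = (1/2) ‖G_in‖_F²` in the Frobenius inner product. -/
theorem inner_grad_in_side {m n : ℕ} (W G : Matrix (Fin m) (Fin n) ℝ) :
    Matrix.trace (Gᵀ * (W * (Wᵀ * G - Gᵀ * W))) =
      (1 / 2) * frobNorm (Wᵀ * G - Gᵀ * W) ^ 2 := by
  rw [frobNorm, Real.sq_sqrt (trace_transpose_mul_self_nonneg _)]
  simp only [Matrix.transpose_sub, Matrix.transpose_mul, Matrix.transpose_transpose,
    Matrix.sub_mul, Matrix.mul_sub, Matrix.trace_sub, Matrix.mul_assoc]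
  have h1 : Matrix.trace (Wᵀ * (G * (Gᵀ * W))) = Matrix.trace (Gᵀ * (W * (Wᵀ * G))) := by
    rw [← Matrix.mul_assoc, Matrix.trace_mul_comm, Matrix.mul_assoc]
  have h2 : Matrix.trace (Wᵀ * (G * (Wᵀ * G))) = Matrix.trace (Gᵀ * (W * (Gᵀ * W))) := by
    rw [← Matrix.trace_transpose (Wᵀ * (G * (Wᵀ * G)))]
    simp [Matrix.transpose_mul, Matrix.mul_assoc]
  rw [h1, h2]; ring
end

section
/- Let W and G be real m×n matrices and set G_out = G Wᵀ − W Gᵀ. Then trace(Gᵀ · (G_out · W)) = (1/2) · ‖G_out‖_F², where ‖·‖_F is the Frobenius norm. -/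
open Matrix

/-- Descent identity for the output-side Lie algebra gradient `G_out = GWᵀ - WGᵀ`:
`⟨G, G_out * W⟩ = (1/2) ‖G_out‖_F²` in the Frobenius inner product. -/
theorem inner_grad_out_side {m n : ℕ} (W G : Matrix (Fin m) (Fin n) ℝ) :
    Matrix.trace (Gᵀ * ((G * Wᵀ - W * Gᵀ) * W)) =
      (1 / 2) * frobNorm (G * Wᵀ - W * Gᵀ) ^ 2 := by
  set A := G * Wᵀ - W * Gᵀ with hA
  have hnn : 0 ≤ Matrix.trace (Aᵀ * A) := by
    have : ∀ i, 0 ≤ (Aᵀ * A) i i := by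
      intro i
      simp only [Matrix.mul_apply, Matrix.transpose_apply]
      exact Finset.sum_nonneg fun j _ => mul_self_nonneg _
    exact Finset.sum_nonneg fun i _ => this i
  rw [frobNorm, Real.sq_sqrt hnn]
  have key : Matrix.trace (Gᵀ * (A * W)) * 2 = Matrix.trace (Aᵀ * A) := by
    rw [hA]
    simp only [Matrix.transpose_sub, Matrix.transpose_mul, Matrix.transpose_transpose,
      Matrix.sub_mul, Matrix.mul_sub, Matrix.trace_sub, ← Matrix.mul_assoc]
    have h1 : Matrix.trace (W * Gᵀ * G * Wᵀ) = Matrix.trace (Gᵀ * G * Wᵀ * W) := by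
      rw [Matrix.trace_mul_comm (W * Gᵀ * G) Wᵀ]
      simpa [Matrix.mul_assoc] using Matrix.trace_mul_comm (Wᵀ * W) (Gᵀ * G)
    have h2 : Matrix.trace (G * Wᵀ * G * Wᵀ) = Matrix.trace (Gᵀ * W * Gᵀ * W) := by
      rw [← Matrix.trace_transpose (G * Wᵀ * G * Wᵀ)]
      simp only [Matrix.transpose_mul, Matrix.transpose_transpose]
      simpa [Matrix.mul_assoc] using Matrix.trace_mul_comm W (Gᵀ * W * Gᵀ)
    have h3 : Matrix.trace (W * Gᵀ * W * Gᵀ) = Matrix.trace (Gᵀ * W * Gᵀ * W) := by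
      rw [Matrix.trace_mul_comm (W * Gᵀ * W) Gᵀ]; simp [Matrix.mul_assoc]
    have h4 : Matrix.trace (G * Wᵀ * W * Gᵀ) = Matrix.trace (Gᵀ * G * Wᵀ * W) := by
      rw [Matrix.trace_mul_comm (G * Wᵀ * W) Gᵀ]
      simpa [Matrix.mul_assoc] using Matrix.trace_mul_comm (Gᵀ * G * Wᵀ) W
    linarith [h1, h2, h3, h4]
  linarith [key]
end

section
/- Let W and G be real m×n matrices, η a real number, G_in = Wᵀ G − Gᵀ W and G_out = G Wᵀ − W Gᵀ. Then the Frobenius inner product of G with the first-order bilateral Pion displacement satisfies ⟨G, −η (G_out · W + W · G_in)⟩ = −(η/2) · (‖G_in‖_F² + ‖G_out‖_F²). -/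
open Matrix

lemma frob_sq_aux {m n : ℕ} (A : Matrix (Fin m) (Fin n) ℝ) :
    (Real.sqrt (Matrix.trace (Aᵀ * A)))^2 = Matrix.trace (Aᵀ * A) := by
  apply Real.sq_sqrt
  have : Matrix.trace (Aᵀ * A) = ∑ j, ∑ i, (A i j)^2 := by
    simp [Matrix.trace, Matrix.mul_apply, Matrix.diag, sq]
  rw [this]; positivity

/-- The Frobenius inner product of `G` with the first-order bilateral Pion displacement
`-η (G_out * W + W * G_in)` equals `-(η/2) (‖G_in‖_F² + ‖G_out‖_F²)`, where
`G_in = WᵀG - GᵀW` and `G_out = GWᵀ - WGᵀ`. -/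
theorem inner_grad_bilateral_displacement {m n : ℕ} (η : ℝ)
    (W G : Matrix (Fin m) (Fin n) ℝ) :
    Matrix.trace (Gᵀ *
        (-(η • ((G * Wᵀ - W * Gᵀ) * W + W * (Wᵀ * G - Gᵀ * W))))) =
      -(η / 2) * (frobNorm (Wᵀ * G - Gᵀ * W) ^ 2 + frobNorm (G * Wᵀ - W * Gᵀ) ^ 2) := by
  rw [frobNorm, frobNorm, frob_sq_aux, frob_sq_aux]
  simp only [Matrix.transpose_sub, Matrix.transpose_mul, Matrix.transpose_transpose,
    Matrix.mul_sub, Matrix.sub_mul, Matrix.mul_add, Matrix.add_mul, Matrix.mul_neg,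
    Matrix.neg_mul, Matrix.mul_smul, Matrix.trace_sub, Matrix.trace_add, Matrix.trace_neg,
    Matrix.trace_smul, smul_eq_mul, Matrix.mul_assoc]
  have h1 : Matrix.trace (Wᵀ*(G*(Wᵀ*G))) = Matrix.trace (Gᵀ*(W*(Gᵀ*W))) := by
    rw [← Matrix.trace_transpose (Wᵀ*(G*(Wᵀ*G)))]
    simp [Matrix.mul_assoc]
  have h2 : Matrix.trace (Wᵀ*(G*(Gᵀ*W))) = Matrix.trace (Gᵀ*(W*(Wᵀ*G))) := by
    rw [← Matrix.mul_assoc, Matrix.trace_mul_comm, Matrix.mul_assoc]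
  have h3 : Matrix.trace (W*(Gᵀ*(G*Wᵀ))) = Matrix.trace (Gᵀ*(G*(Wᵀ*W))) := by
    rw [Matrix.trace_mul_comm W, Matrix.mul_assoc, Matrix.mul_assoc]
  have h4 : Matrix.trace (G*(Wᵀ*(G*Wᵀ))) = Matrix.trace (Gᵀ*(W*(Gᵀ*W))) := by
    rw [← Matrix.trace_transpose (G*(Wᵀ*(G*Wᵀ)))]
    simp only [Matrix.transpose_mul, Matrix.transpose_transpose]
    rw [Matrix.trace_mul_comm _ Gᵀ]; simp [Matrix.mul_assoc]
  have h5 : Matrix.trace (W*(Gᵀ*(W*Gᵀ))) = Matrix.trace (Gᵀ*(W*(Gᵀ*W))) := by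
    rw [Matrix.trace_mul_comm W, Matrix.mul_assoc, Matrix.mul_assoc]
  have h6 : Matrix.trace (G*(Wᵀ*(W*Gᵀ))) = Matrix.trace (Gᵀ*(G*(Wᵀ*W))) := by
    rw [← Matrix.trace_transpose (G*(Wᵀ*(W*Gᵀ)))]
    simp only [Matrix.transpose_mul, Matrix.transpose_transpose]
    rw [Matrix.trace_mul_comm _ Gᵀ]; simp [Matrix.mul_assoc]
  rw [h1, h2, h3, h4, h5, h6]
  ring
end

section
/- Let W be a real m×n matrix and G_in, G_out real n×n and m×m matrices respectively; let η, γ, B be nonnegative reals with ‖W‖₂ ≤ γ, ‖G_in‖_F ≤ B and ‖G_out‖_F ≤ B. Define E₂(X) = I + X + (1/2)X² and set R = E₂(−η G_out) · W · E₂(−η G_in) − W + η (G_out · W + W · G_in). Then ‖R‖_F ≤ γ · (η² + (B/2)·η³ + (B²/8)·η⁴) · (‖G_in‖_F² + ‖G_out‖_F²). -/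
open Matrix

/-- The spectral norm of a real matrix: the operator norm of the induced linear map
between Euclidean spaces. -/
noncomputable def specNorm {m n : ℕ} (A : Matrix (Fin m) (Fin n) ℝ) : ℝ :=
  ‖(LinearMap.toContinuousLinearMap (Matrix.toEuclideanLin A) :
      EuclideanSpace ℝ (Fin n) →L[ℝ] EuclideanSpace ℝ (Fin m))‖

/-- Second-order truncation of the matrix exponential: `E₂(X) = I + X + (1/2) X²`. -/
noncomputable def expTrunc2 {k : ℕ} (X : Matrix (Fin k) (Fin k) ℝ) :
    Matrix (Fin k) (Fin k) ℝ :=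
  1 + X + (1 / 2 : ℝ) • (X * X)

lemma frobNorm_eq_sqrt {m n : ℕ} (A : Matrix (Fin m) (Fin n) ℝ) :
    frobNorm A = Real.sqrt (∑ j, ∑ i, (A i j) ^ 2) := by
  unfold frobNorm
  congr 1
  simp [Matrix.trace, Matrix.diag, Matrix.mul_apply, sq]

lemma frobNorm_nonneg {m n : ℕ} (A : Matrix (Fin m) (Fin n) ℝ) : 0 ≤ frobNorm A :=
  Real.sqrt_nonneg _

section Frob
attribute [local instance] Matrix.frobeniusSeminormedAddCommGroup Matrix.frobeniusNormSMulClass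

lemma frobNorm_eq_norm {m n : ℕ} (A : Matrix (Fin m) (Fin n) ℝ) : frobNorm A = ‖A‖ := by
  rw [frobNorm_eq_sqrt, Matrix.frobenius_norm_def, Real.sqrt_eq_rpow]
  rw [Finset.sum_comm]
  congr 1
  congr 1
  ext i
  congr 1
  ext j
  rw [Real.rpow_two, Real.norm_eq_abs, sq_abs]

lemma frobNorm_add_le {m n : ℕ} (A B : Matrix (Fin m) (Fin n) ℝ) :
    frobNorm (A + B) ≤ frobNorm A + frobNorm B := by
  simp only [frobNorm_eq_norm]; exact norm_add_le A B

lemma frobNorm_smul {m n : ℕ} (c : ℝ) (A : Matrix (Fin m) (Fin n) ℝ) :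
    frobNorm (c • A) = |c| * frobNorm A := by
  simp only [frobNorm_eq_norm]
  rw [norm_smul, Real.norm_eq_abs]

lemma frobNorm_mul_le {l m n : ℕ} (A : Matrix (Fin l) (Fin m) ℝ) (B : Matrix (Fin m) (Fin n) ℝ) :
    frobNorm (A * B) ≤ frobNorm A * frobNorm B := by
  simp only [frobNorm_eq_norm]; exact Matrix.frobenius_norm_mul A B

lemma frobNorm_transpose {m n : ℕ} (A : Matrix (Fin m) (Fin n) ℝ) :
    frobNorm Aᵀ = frobNorm A := by
  simp only [frobNorm_eq_norm]; exact Matrix.frobenius_norm_transpose A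

end Frob

section Spec
open scoped Matrix.Norms.L2Operator

lemma specNorm_eq_norm {m n : ℕ} (A : Matrix (Fin m) (Fin n) ℝ) : specNorm A = ‖A‖ := rfl

lemma specNorm_nonneg {m n : ℕ} (A : Matrix (Fin m) (Fin n) ℝ) : 0 ≤ specNorm A := by
  rw [specNorm_eq_norm]; exact norm_nonneg _

lemma specNorm_transpose {m n : ℕ} (A : Matrix (Fin m) (Fin n) ℝ) :
    specNorm Aᵀ = specNorm A := by
  have h : Aᵀ = Aᴴ := by
    ext i j; simp [Matrix.conjTranspose_apply]
  rw [h, specNorm_eq_norm, specNorm_eq_norm]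
  exact Matrix.l2_opNorm_conjTranspose A

lemma specNorm_mulVec_le {m n : ℕ} (A : Matrix (Fin m) (Fin n) ℝ) (x : Fin n → ℝ) :
    Real.sqrt (∑ i, (A.mulVec x i) ^ 2) ≤ specNorm A * Real.sqrt (∑ i, (x i) ^ 2) := by
  have h := Matrix.l2_opNorm_mulVec A ((WithLp.equiv 2 _).symm x)
  rw [specNorm_eq_norm]
  calc Real.sqrt (∑ i, (A.mulVec x i) ^ 2)
      = ‖(EuclideanSpace.equiv (Fin m) ℝ).symm (A *ᵥ ((WithLp.equiv 2 _).symm x))‖ := by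
        rw [EuclideanSpace.norm_eq]
        congr 1
        apply Finset.sum_congr rfl
        intro i _
        rw [Real.norm_eq_abs, sq_abs]
        rfl
    _ ≤ ‖A‖ * ‖(WithLp.equiv 2 _).symm x‖ := h
    _ = ‖A‖ * Real.sqrt (∑ i, (x i) ^ 2) := by
        congr 1
        rw [EuclideanSpace.norm_eq]
        congr 1
        apply Finset.sum_congr rfl
        intro i _
        rw [Real.norm_eq_abs, sq_abs]
        rfl

end Spec

lemma frobNorm_mul_le_spec_left {l m n : ℕ} (A : Matrix (Fin l) (Fin m) ℝ)
    (B : Matrix (Fin m) (Fin n) ℝ) :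
    frobNorm (A * B) ≤ specNorm A * frobNorm B := by
  rw [frobNorm_eq_sqrt, frobNorm_eq_sqrt]
  have key : ∀ j, ∑ i, ((A * B) i j) ^ 2 ≤ specNorm A ^ 2 * ∑ i, (B i j) ^ 2 := by
    intro j
    have h := specNorm_mulVec_le A (fun k => B k j)
    have hu : (0 : ℝ) ≤ ∑ i, ((A * B) i j) ^ 2 := by positivity
    have hmv : ∀ i, A.mulVec (fun k => B k j) i = (A * B) i j := by
      intro i; simp [Matrix.mulVec, Matrix.mul_apply, dotProduct]
    simp only [hmv] at h
    have h2 := pow_le_pow_left₀ (Real.sqrt_nonneg _) h 2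
    rw [Real.sq_sqrt hu, mul_pow, Real.sq_sqrt (by positivity : (0:ℝ) ≤ ∑ i, (B i j)^2)] at h2
    exact h2
  calc Real.sqrt (∑ j, ∑ i, ((A * B) i j) ^ 2)
      ≤ Real.sqrt (∑ j, specNorm A ^ 2 * ∑ i, (B i j) ^ 2) := by
        apply Real.sqrt_le_sqrt
        exact Finset.sum_le_sum fun j _ => key j
    _ = specNorm A * Real.sqrt (∑ j, ∑ i, (B i j) ^ 2) := by
        rw [← Finset.mul_sum, Real.sqrt_mul (by positivity), Real.sqrt_sq (specNorm_nonneg A)]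

lemma frobNorm_mul_le_spec_right {l m n : ℕ} (A : Matrix (Fin l) (Fin m) ℝ)
    (B : Matrix (Fin m) (Fin n) ℝ) :
    frobNorm (A * B) ≤ frobNorm A * specNorm B := by
  have h : frobNorm (A * B) = frobNorm (Bᵀ * Aᵀ) := by
    rw [← Matrix.transpose_mul, frobNorm_transpose]
  rw [h]
  calc frobNorm (Bᵀ * Aᵀ) ≤ specNorm Bᵀ * frobNorm Aᵀ := frobNorm_mul_le_spec_left _ _
    _ = frobNorm A * specNorm B := by rw [specNorm_transpose, frobNorm_transpose, mul_comm]

lemma expand_R {m n : ℕ} (W : Matrix (Fin m) (Fin n) ℝ)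
    (Gin : Matrix (Fin n) (Fin n) ℝ) (Gout : Matrix (Fin m) (Fin m) ℝ) (η : ℝ) :
    expTrunc2 (-(η • Gout)) * W * expTrunc2 (-(η • Gin)) - W + η • (Gout * W + W * Gin) =
      (η ^ 2 / 2) • (W * (Gin * Gin)) + (η ^ 2) • (Gout * (W * Gin)) +
      (η ^ 2 / 2) • (Gout * Gout * W) +
      (-(η ^ 3 / 2)) • (Gout * (W * (Gin * Gin))) +
      (-(η ^ 3 / 2)) • (Gout * Gout * W * Gin) +
      (η ^ 4 / 4) • (Gout * Gout * W * (Gin * Gin)) := by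
  simp only [expTrunc2, neg_smul, Matrix.mul_add, Matrix.add_mul, Matrix.mul_one,
    Matrix.one_mul, Matrix.smul_mul, Matrix.mul_smul, smul_smul, neg_mul, mul_neg,
    Matrix.neg_mul, Matrix.mul_neg, smul_neg, Matrix.mul_assoc, smul_add]
  module

lemma pion_arith (η γ B gi go σ : ℝ) (hη : 0 ≤ η) (hγ : 0 ≤ γ) (hB : 0 ≤ B)
    (hσ : 0 ≤ σ) (hσγ : σ ≤ γ) (hgi0 : 0 ≤ gi) (hgo0 : 0 ≤ go)
    (hgi : gi ≤ B) (hgo : go ≤ B) :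
    (η ^ 2 / 2) * (σ * (gi * gi)) + (η ^ 2) * (go * (σ * gi)) +
      (η ^ 2 / 2) * (go * go * σ) + (η ^ 3 / 2) * (go * (σ * (gi * gi))) +
      (η ^ 3 / 2) * (go * go * σ * gi) + (η ^ 4 / 4) * (go * go * σ * (gi * gi)) ≤
      γ * (η ^ 2 + (B / 2) * η ^ 3 + (B ^ 2 / 8) * η ^ 4) * (gi ^ 2 + go ^ 2) := by
  have e2 : (0:ℝ) ≤ η^2 := by positivity
  have e3 : (0:ℝ) ≤ η^3 := by positivity
  have e4 : (0:ℝ) ≤ η^4 := by positivity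
  have c2 : σ * (gi * gi / 2 + go * gi + go * go / 2) ≤ γ * (gi ^ 2 + go ^ 2) := by
    have h1 : gi * gi / 2 + go * gi + go * go / 2 ≤ gi ^ 2 + go ^ 2 := by
      nlinarith [sq_nonneg (gi - go)]
    calc σ * (gi * gi / 2 + go * gi + go * go / 2) ≤ σ * (gi ^ 2 + go ^ 2) := by
          apply mul_le_mul_of_nonneg_left h1 hσ
      _ ≤ γ * (gi ^ 2 + go ^ 2) := by apply mul_le_mul_of_nonneg_right hσγ; positivity
  have c3 : σ * (go * (gi * gi) / 2 + go * go * gi / 2) ≤ γ * ((B / 2) * (gi ^ 2 + go ^ 2)) := by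
    have h1 : go * (gi * gi) ≤ B * gi ^ 2 := by
      have := mul_le_mul_of_nonneg_right hgo (mul_nonneg hgi0 hgi0)
      calc go * (gi * gi) ≤ B * (gi * gi) := this
        _ = B * gi ^ 2 := by ring
    have h2 : go * go * gi ≤ B * go ^ 2 := by
      have h0 : go * go * gi ≤ go * go * B := by
        apply mul_le_mul_of_nonneg_left hgi (mul_nonneg hgo0 hgo0)
      calc go * go * gi ≤ go * go * B := h0
        _ = B * go ^ 2 := by ring
    have h3 : σ * (go * (gi * gi) / 2 + go * go * gi / 2) ≤
        γ * (go * (gi * gi) / 2 + go * go * gi / 2) := by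
      apply mul_le_mul_of_nonneg_right hσγ; positivity
    have h4 : γ * (go * (gi * gi) / 2 + go * go * gi / 2) ≤
        γ * ((B / 2) * (gi ^ 2 + go ^ 2)) := by
      apply mul_le_mul_of_nonneg_left _ hγ
      linarith
    linarith
  have c4 : σ * (go * go * (gi * gi) / 4) ≤ γ * ((B ^ 2 / 8) * (gi ^ 2 + go ^ 2)) := by
    have hgo2 : go * go ≤ B ^ 2 := by
      calc go * go ≤ B * B := mul_le_mul hgo hgo hgo0 hB
        _ = B ^ 2 := by ring
    have hgi2 : gi * gi ≤ B ^ 2 := by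
      calc gi * gi ≤ B * B := mul_le_mul hgi hgi hgi0 hB
        _ = B ^ 2 := by ring
    have h1 : go * go * (gi * gi) ≤ B ^ 2 * gi ^ 2 := by
      calc go * go * (gi * gi) ≤ B ^ 2 * (gi * gi) :=
            mul_le_mul_of_nonneg_right hgo2 (mul_nonneg hgi0 hgi0)
        _ = B ^ 2 * gi ^ 2 := by ring
    have h2 : go * go * (gi * gi) ≤ B ^ 2 * go ^ 2 := by
      calc go * go * (gi * gi) ≤ go * go * B ^ 2 :=
            mul_le_mul_of_nonneg_left hgi2 (mul_nonneg hgo0 hgo0)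
        _ = B ^ 2 * go ^ 2 := by ring
    have h3 : σ * (go * go * (gi * gi) / 4) ≤ γ * (go * go * (gi * gi) / 4) := by
      apply mul_le_mul_of_nonneg_right hσγ; positivity
    have h4 : γ * (go * go * (gi * gi) / 4) ≤ γ * ((B ^ 2 / 8) * (gi ^ 2 + go ^ 2)) := by
      apply mul_le_mul_of_nonneg_left _ hγ
      linarith
    linarith
  have m2 := mul_le_mul_of_nonneg_left c2 e2
  have m3 := mul_le_mul_of_nonneg_left c3 e3
  have m4 := mul_le_mul_of_nonneg_left c4 e4
  have lhs_eq : (η ^ 2 / 2) * (σ * (gi * gi)) + (η ^ 2) * (go * (σ * gi)) +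
      (η ^ 2 / 2) * (go * go * σ) + (η ^ 3 / 2) * (go * (σ * (gi * gi))) +
      (η ^ 3 / 2) * (go * go * σ * gi) + (η ^ 4 / 4) * (go * go * σ * (gi * gi)) =
      η ^ 2 * (σ * (gi * gi / 2 + go * gi + go * go / 2)) +
      η ^ 3 * (σ * (go * (gi * gi) / 2 + go * go * gi / 2)) +
      η ^ 4 * (σ * (go * go * (gi * gi) / 4)) := by ring
  have rhs_eq : γ * (η ^ 2 + (B / 2) * η ^ 3 + (B ^ 2 / 8) * η ^ 4) * (gi ^ 2 + go ^ 2) =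
      η ^ 2 * (γ * (gi ^ 2 + go ^ 2)) + η ^ 3 * (γ * ((B / 2) * (gi ^ 2 + go ^ 2))) +
      η ^ 4 * (γ * ((B ^ 2 / 8) * (gi ^ 2 + go ^ 2))) := by ring
  rw [lhs_eq, rhs_eq]
  exact add_le_add (add_le_add m2 m3) m4

/-- Remainder bound for the truncated bilateral Pion update: with
`R = E₂(-η G_out) W E₂(-η G_in) - W + η (G_out W + W G_in)`, we have
`‖R‖_F ≤ γ (η² + (B/2) η³ + (B²/8) η⁴) (‖G_in‖_F² + ‖G_out‖_F²)`. -/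
theorem pion_remainder_bound {m n : ℕ}
    (W : Matrix (Fin m) (Fin n) ℝ)
    (Gin : Matrix (Fin n) (Fin n) ℝ) (Gout : Matrix (Fin m) (Fin m) ℝ)
    (η γ B : ℝ) (hη : 0 ≤ η) (hγ : 0 ≤ γ) (hB : 0 ≤ B)
    (hW : specNorm W ≤ γ)
    (hGin : frobNorm Gin ≤ B) (hGout : frobNorm Gout ≤ B) :
    frobNorm (expTrunc2 (-(η • Gout)) * W * expTrunc2 (-(η • Gin)) - W +
        η • (Gout * W + W * Gin)) ≤
      γ * (η ^ 2 + (B / 2) * η ^ 3 + (B ^ 2 / 8) * η ^ 4) *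
        (frobNorm Gin ^ 2 + frobNorm Gout ^ 2) := by
  set gi := frobNorm Gin with hgi
  set go := frobNorm Gout with hgo
  set σ := specNorm W with hσdef
  have hginn : 0 ≤ gi := frobNorm_nonneg _
  have hgonn : 0 ≤ go := frobNorm_nonneg _
  have hσnn : 0 ≤ σ := specNorm_nonneg _
  rw [expand_R]
  have h1 : frobNorm (W * (Gin * Gin)) ≤ σ * (gi * gi) :=
    (frobNorm_mul_le_spec_left _ _).trans
      (mul_le_mul_of_nonneg_left (frobNorm_mul_le Gin Gin) hσnn)
  have hWGin : frobNorm (W * Gin) ≤ σ * gi := frobNorm_mul_le_spec_left _ _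
  have h2 : frobNorm (Gout * (W * Gin)) ≤ go * (σ * gi) :=
    (frobNorm_mul_le _ _).trans (mul_le_mul_of_nonneg_left hWGin hgonn)
  have h3 : frobNorm (Gout * Gout * W) ≤ go * go * σ :=
    (frobNorm_mul_le_spec_right _ _).trans
      (mul_le_mul_of_nonneg_right (frobNorm_mul_le Gout Gout) hσnn)
  have h4 : frobNorm (Gout * (W * (Gin * Gin))) ≤ go * (σ * (gi * gi)) :=
    (frobNorm_mul_le _ _).trans (mul_le_mul_of_nonneg_left h1 hgonn)
  have h5 : frobNorm (Gout * Gout * W * Gin) ≤ go * go * σ * gi :=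
    (frobNorm_mul_le _ _).trans
      (mul_le_mul h3 le_rfl hginn (by positivity))
  have h6 : frobNorm (Gout * Gout * W * (Gin * Gin)) ≤ go * go * σ * (gi * gi) :=
    (frobNorm_mul_le _ _).trans
      (mul_le_mul h3 (frobNorm_mul_le Gin Gin) (frobNorm_nonneg _) (by positivity))
  have tri : frobNorm ((η ^ 2 / 2) • (W * (Gin * Gin)) + (η ^ 2) • (Gout * (W * Gin)) +
      (η ^ 2 / 2) • (Gout * Gout * W) +
      (-(η ^ 3 / 2)) • (Gout * (W * (Gin * Gin))) +
      (-(η ^ 3 / 2)) • (Gout * Gout * W * Gin) +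
      (η ^ 4 / 4) • (Gout * Gout * W * (Gin * Gin))) ≤
      (η ^ 2 / 2) * frobNorm (W * (Gin * Gin)) + (η ^ 2) * frobNorm (Gout * (W * Gin)) +
      (η ^ 2 / 2) * frobNorm (Gout * Gout * W) +
      (η ^ 3 / 2) * frobNorm (Gout * (W * (Gin * Gin))) +
      (η ^ 3 / 2) * frobNorm (Gout * Gout * W * Gin) +
      (η ^ 4 / 4) * frobNorm (Gout * Gout * W * (Gin * Gin)) := by
    calc _ ≤ frobNorm ((η ^ 2 / 2) • (W * (Gin * Gin)) + (η ^ 2) • (Gout * (W * Gin)) +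
          (η ^ 2 / 2) • (Gout * Gout * W) + (-(η ^ 3 / 2)) • (Gout * (W * (Gin * Gin))) +
          (-(η ^ 3 / 2)) • (Gout * Gout * W * Gin)) +
          frobNorm ((η ^ 4 / 4) • (Gout * Gout * W * (Gin * Gin))) := frobNorm_add_le _ _
      _ ≤ (frobNorm ((η ^ 2 / 2) • (W * (Gin * Gin)) + (η ^ 2) • (Gout * (W * Gin)) +
          (η ^ 2 / 2) • (Gout * Gout * W) + (-(η ^ 3 / 2)) • (Gout * (W * (Gin * Gin)))) +
          frobNorm ((-(η ^ 3 / 2)) • (Gout * Gout * W * Gin))) +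
          frobNorm ((η ^ 4 / 4) • (Gout * Gout * W * (Gin * Gin))) := by
            gcongr ?_ + _; exact frobNorm_add_le _ _
      _ ≤ ((frobNorm ((η ^ 2 / 2) • (W * (Gin * Gin)) + (η ^ 2) • (Gout * (W * Gin)) +
          (η ^ 2 / 2) • (Gout * Gout * W)) +
          frobNorm ((-(η ^ 3 / 2)) • (Gout * (W * (Gin * Gin))))) +
          frobNorm ((-(η ^ 3 / 2)) • (Gout * Gout * W * Gin))) +
          frobNorm ((η ^ 4 / 4) • (Gout * Gout * W * (Gin * Gin))) := by
            gcongr (?_ + _) + _; exact frobNorm_add_le _ _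
      _ ≤ (((frobNorm ((η ^ 2 / 2) • (W * (Gin * Gin)) + (η ^ 2) • (Gout * (W * Gin))) +
          frobNorm ((η ^ 2 / 2) • (Gout * Gout * W))) +
          frobNorm ((-(η ^ 3 / 2)) • (Gout * (W * (Gin * Gin))))) +
          frobNorm ((-(η ^ 3 / 2)) • (Gout * Gout * W * Gin))) +
          frobNorm ((η ^ 4 / 4) • (Gout * Gout * W * (Gin * Gin))) := by
            gcongr ((?_ + _) + _) + _; exact frobNorm_add_le _ _
      _ ≤ ((((frobNorm ((η ^ 2 / 2) • (W * (Gin * Gin))) +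
          frobNorm ((η ^ 2) • (Gout * (W * Gin)))) +
          frobNorm ((η ^ 2 / 2) • (Gout * Gout * W))) +
          frobNorm ((-(η ^ 3 / 2)) • (Gout * (W * (Gin * Gin))))) +
          frobNorm ((-(η ^ 3 / 2)) • (Gout * Gout * W * Gin))) +
          frobNorm ((η ^ 4 / 4) • (Gout * Gout * W * (Gin * Gin))) := by
            gcongr (((?_ + _) + _) + _) + _; exact frobNorm_add_le _ _
      _ = _ := by
            rw [frobNorm_smul, frobNorm_smul, frobNorm_smul, frobNorm_smul, frobNorm_smul,
              frobNorm_smul]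
            have a1 : |η ^ 2 / 2| = η ^ 2 / 2 := abs_of_nonneg (by positivity)
            have a2 : |η ^ 2| = η ^ 2 := abs_of_nonneg (by positivity)
            have a3 : |(-(η ^ 3 / 2))| = η ^ 3 / 2 := by
              rw [abs_neg]; exact abs_of_nonneg (by positivity)
            have a4 : |η ^ 4 / 4| = η ^ 4 / 4 := abs_of_nonneg (by positivity)
            rw [a1, a2, a3, a4]
  refine tri.trans (le_trans ?_
    (pion_arith η γ B gi go σ hη hγ hB hσnn hW hginn hgonn hGin hGout))
  have b1 := mul_le_mul_of_nonneg_left h1 (by positivity : (0:ℝ) ≤ η ^ 2 / 2)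
  have b2 := mul_le_mul_of_nonneg_left h2 (by positivity : (0:ℝ) ≤ η ^ 2)
  have b3 := mul_le_mul_of_nonneg_left h3 (by positivity : (0:ℝ) ≤ η ^ 2 / 2)
  have b4 := mul_le_mul_of_nonneg_left h4 (by positivity : (0:ℝ) ≤ η ^ 3 / 2)
  have b5 := mul_le_mul_of_nonneg_left h5 (by positivity : (0:ℝ) ≤ η ^ 3 / 2)
  have b6 := mul_le_mul_of_nonneg_left h6 (by positivity : (0:ℝ) ≤ η ^ 4 / 4)
  exact add_le_add (add_le_add (add_le_add (add_le_add (add_le_add b1 b2) b3) b4) b5) b6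
end
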